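/- The polynomial P₁₁(X) = X^6 - X^5 + 7X^4 - 35X^3 + 77X^2 - 121X + 1331 is irreducible over ℚ. -/

import Mathlib

/-!
Modulo 2, `P₁₁` is the product of the irreducible cubics `X³ + X² + 1` and `X³ + X + 1`;
modulo 3 it is `(X² + 1)² (X² + 2X + 2)` with irreducible quadratic factors. The reduction of a
monic integer factor of `P₁₁` divides these, so its degree is a multiple of both 3 and 2, hence
0 or 6. Gauss's lemma transfers irreducibility from `ℤ` to `ℚ`.
-/

open Polynomial

/-- `P₁₁(X) = X^6 - X^5 + 7X^4 - 35X^3 + 77X^2 - 121X + 1331`, the characteristic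
polynomial of Frobenius at 11. -/
noncomputable def P11 : Polynomial ℤ :=
  X ^ 6 - X ^ 5 + 7 * X ^ 4 - 35 * X ^ 3 + 77 * X ^ 2 - 121 * X + 1331

namespace Polynomial

theorem dvd_natDegree_of_dvd_multiset_prod {K : Type*} [Field K] {d : ℕ} {s : Multiset K[X]}
    (hs : ∀ q ∈ s, Irreducible q ∧ d ∣ q.natDegree) {A : K[X]} (hA : A ∣ s.prod) :
    d ∣ A.natDegree := by
  induction A using UniqueFactorizationMonoid.induction_on_prime with
  | h₁ =>
    exact absurd (zero_dvd_iff.mp hA)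
      (Multiset.prod_ne_zero fun h0 => (hs 0 h0).1.ne_zero rfl)
  | h₂ u hu => simp [natDegree_eq_zero_of_isUnit hu]
  | h₃ a p ha hp ih =>
    obtain ⟨q, hq, hpq⟩ := hp.exists_mem_multiset_dvd (dvd_of_mul_right_dvd hA)
    have hdeg : p.natDegree = q.natDegree :=
      natDegree_eq_of_degree_eq (degree_eq_degree_of_associated
        (hp.irreducible.associated_of_dvd (hs q hq).1 hpq))
    rw [natDegree_mul hp.ne_zero ha, hdeg]
    exact dvd_add (hs q hq).2 (ih (dvd_of_mul_left_dvd hA))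

theorem Monic.dvd_natDegree_of_dvd_of_map_eq_prod {R K : Type*} [CommRing R] [Field K]
    (φ : R →+* K) {f g : R[X]} (hg : g.Monic) (hgf : g ∣ f) {d : ℕ} {s : Multiset K[X]}
    (hs : ∀ q ∈ s, Irreducible q ∧ d ∣ q.natDegree) (hf : f.map φ = s.prod) :
    d ∣ g.natDegree := by
  rw [← hg.natDegree_map φ]
  exact dvd_natDegree_of_dvd_multiset_prod hs (hf ▸ map_dvd φ hgf)

theorem irreducible_and_dvd_natDegree_of_not_isRoot {K : Type*} [Field K] {p : K[X]} {n : ℕ}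
    (hp : p.natDegree = n) (hn : n ∈ Finset.Icc 1 3) (hroot : ∀ x, ¬ p.IsRoot x) :
    Irreducible p ∧ n ∣ p.natDegree :=
  ⟨irreducible_of_degree_le_three_of_not_isRoot (hp ▸ hn) hroot, hp ▸ dvd_rfl⟩

end Polynomial

theorem monic_P11 : P11.Monic := by
  unfold P11
  monicity!

theorem natDegree_P11 : P11.natDegree = 6 := by
  unfold P11
  compute_degree!

theorem map_P11_zmod_two : P11.map (Int.castRingHom (ZMod 2)) =
    ({X ^ 3 + X ^ 2 + 1, X ^ 3 + X + 1} : Multiset (ZMod 2)[X]).prod := by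
  simp only [P11, Polynomial.map_add, Polynomial.map_sub, Polynomial.map_mul, Polynomial.map_pow,
    Polynomial.map_ofNat, map_X, Multiset.insert_eq_cons, Multiset.prod_cons,
    Multiset.prod_singleton]
  ring_nf
  reduce_mod_char

theorem map_P11_zmod_three : P11.map (Int.castRingHom (ZMod 3)) =
    ({X ^ 2 + 1, X ^ 2 + 1, X ^ 2 + 2 * X + 2} : Multiset (ZMod 3)[X]).prod := by
  simp only [P11, Polynomial.map_add, Polynomial.map_sub, Polynomial.map_mul, Polynomial.map_pow,
    Polynomial.map_ofNat, map_X, Multiset.insert_eq_cons, Multiset.prod_cons,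
    Multiset.prod_singleton]
  ring_nf
  reduce_mod_char
  ring_nf
  reduce_mod_char

theorem three_dvd_natDegree_of_dvd_P11 {g : ℤ[X]} (hg : g.Monic) (hgP : g ∣ P11) :
    3 ∣ g.natDegree := by
  refine hg.dvd_natDegree_of_dvd_of_map_eq_prod _ hgP ?_ map_P11_zmod_two
  simp only [Multiset.insert_eq_cons, Multiset.mem_cons, Multiset.mem_singleton]
  rintro q (rfl | rfl) <;>
    exact irreducible_and_dvd_natDegree_of_not_isRoot (by compute_degree!) (by decide)
      (by simp only [IsRoot.def, eval_add, eval_pow, eval_X, eval_one]; decide)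

theorem two_dvd_natDegree_of_dvd_P11 {g : ℤ[X]} (hg : g.Monic) (hgP : g ∣ P11) :
    2 ∣ g.natDegree := by
  refine hg.dvd_natDegree_of_dvd_of_map_eq_prod _ hgP ?_ map_P11_zmod_three
  simp only [Multiset.insert_eq_cons, Multiset.mem_cons, Multiset.mem_singleton]
  rintro q (rfl | rfl | rfl) <;>
    exact irreducible_and_dvd_natDegree_of_not_isRoot (by compute_degree!) (by decide)
      (by
        simp only [IsRoot.def, eval_add, eval_mul, eval_pow, eval_X, eval_one, eval_ofNat]
        decide)

theorem six_dvd_natDegree_of_dvd_P11 {g : ℤ[X]} (hg : g.Monic) (hgP : g ∣ P11) :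
    6 ∣ g.natDegree :=
  Nat.Coprime.mul_dvd_of_dvd_of_dvd (by norm_num)
    (two_dvd_natDegree_of_dvd_P11 hg hgP) (three_dvd_natDegree_of_dvd_P11 hg hgP)

theorem irreducible_P11 : Irreducible P11 := by
  refine monic_P11.irreducible_iff_natDegree.mpr ⟨fun h => ?_, fun f g hf hg hfg => ?_⟩
  · simpa [h] using natDegree_P11
  · have hdeg : f.natDegree + g.natDegree = 6 := by
      rw [← hf.natDegree_mul hg, hfg, natDegree_P11]
    have hf6 := six_dvd_natDegree_of_dvd_P11 hf (hfg ▸ dvd_mul_right f g)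
    have hg6 := six_dvd_natDegree_of_dvd_P11 hg (hfg ▸ dvd_mul_left g f)
    omega

/-- `P₁₁` is irreducible over `ℚ`. -/
theorem P11_irreducible_over_Q : Irreducible (P11.map (Int.castRingHom ℚ)) := by
  simpa [algebraMap_int_eq] using
    (monic_P11.irreducible_iff_irreducible_map_fraction_map (K := ℚ)).mp irreducible_P11
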